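/- Let P ≥ 2, ω₁,…,ω_P pairwise distinct nonzero reals, β₁,…,β_P nonzero reals, κ₁,…,κ_P pairwise distinct reals with κ_jω_i ≠ 1 and κ_j ≠ 0 for all i,j, and let ω_q, ω_P be arbitrary indices' weights with 1-κ_jω_P ≠ 0 and 1-κ_jω_q ≠ 0 for all j. Define x_i = Σ_{j=1}^P ∏_{k≠j} ∏_{l≠i} [(1-κ_jω_i)/(β_i κ_j)] · [(1-κ_kω_i)/(κ_k-κ_j)] · [(1-κ_jω_l)/(ω_l-ω_i)] · log|(1-κ_jω_q)/(1-κ_jω_P)|. Then x = (x₁,…,x_P) solves the linear system Σ_{i=1}^P [κ_jβ_i/(1-κ_jω_i)] x_i = log|(1-κ_jω_q)/(1-κ_jω_P)| for every j = 1,…,P. -/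

import Mathlib

/-!
The closed form is `x = B L`, where `B` is a right inverse of `A = (κ_j β_i / (1 - κ_j ω_i))`.
After cancelling `β_i`, the `κ`'s and the Cauchy denominators, the entry `(A B)_{j j'}` is a
multiple of `∑_i f(ω_i) ∏_{l ≠ i} (1 - κ_{j'} ω_l) / (ω_l - ω_i)` with
`f(X) = ∏_{k ≠ j} (1 - κ_k X)` of degree `P - 1`. By Lagrange interpolation at the nodes `ω_i`,
this sum is `(-κ_{j'})^(P-1) f(1/κ_{j'})`, which equals `∏_{k ≠ j} (κ_k - κ_j)` if `j' = j` and
vanishes otherwise.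
-/

open Finset Polynomial
open scoped Matrix

variable {F ι : Type*} [Field F] [DecidableEq ι]

theorem eval_eq_sum_eval_mul_prod_div_of_degree_lt {s : Finset ι} {v : ι → F}
    (hvs : Set.InjOn v s) {f : F[X]} (hf : f.degree < #s) (t : F) :
    f.eval t = ∑ i ∈ s, f.eval (v i) * ∏ l ∈ s.erase i, (t - v l) / (v i - v l) := by
  conv_lhs => rw [Lagrange.eq_interpolate hvs hf]
  simp [Lagrange.interpolate_apply, eval_finsetSum, Lagrange.basis, eval_prod,
    Lagrange.basisDivisor, div_eq_inv_mul]

theorem natDegree_prod_one_sub_C_mul_X_le {κ : Type*} (T : Finset κ) (a : κ → F) :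
    (∏ k ∈ T, (1 - C (a k) * X)).natDegree ≤ #T := by
  refine (natDegree_prod_le _ _).trans ?_
  have h : ∀ k ∈ T, (1 - C (a k) * X).natDegree ≤ 1 := fun k _ => by compute_degree
  simpa using Finset.sum_le_card_nsmul T _ 1 h

theorem sum_prod_one_sub_mul_mul_prod_div_sub {κ : Type*} {s : Finset ι} {v : ι → F}
    (hvs : Set.InjOn v s) {T : Finset κ} (hT : #T + 1 = #s) (a : κ → F) {c : F} (hc : c ≠ 0) :
    ∑ i ∈ s, (∏ k ∈ T, (1 - a k * v i)) * ∏ l ∈ s.erase i, (1 - c * v l) / (v l - v i) =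
      ∏ k ∈ T, (a k - c) := by
  set f : F[X] := ∏ k ∈ T, (1 - C (a k) * X)
  have hf : f.degree < #s := by
    refine (degree_le_natDegree).trans_lt ?_
    exact_mod_cast (natDegree_prod_one_sub_C_mul_X_le T a).trans_lt (by omega)
  have hfeval (t : F) : f.eval t = ∏ k ∈ T, (1 - a k * t) := by simp [f, eval_prod]
  -- `1 - c * v l = -c * (c⁻¹ - v l)`: the sum is Lagrange's formula for `f` at `c⁻¹`
  have hnode : ∀ i ∈ s, ∏ l ∈ s.erase i, (1 - c * v l) / (v l - v i) =
      (-c) ^ #T * ∏ l ∈ s.erase i, (c⁻¹ - v l) / (v i - v l) := by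
    intro i hi
    have hcard : #T = #(s.erase i) := by rw [card_erase_of_mem hi]; omega
    rw [hcard, ← prod_const, ← prod_mul_distrib]
    refine prod_congr rfl fun l hl => ?_
    have hne : v l - v i ≠ 0 := sub_ne_zero.mpr fun h =>
      (mem_erase.mp hl).1 (hvs (mem_erase.mp hl).2 hi h)
    have hne' : v i - v l ≠ 0 := fun h => hne (by linear_combination -h)
    field_simp
    ring
  calc ∑ i ∈ s, (∏ k ∈ T, (1 - a k * v i)) * ∏ l ∈ s.erase i, (1 - c * v l) / (v l - v i)
      = (-c) ^ #T * f.eval c⁻¹ := by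
        rw [eval_eq_sum_eval_mul_prod_div_of_degree_lt hvs hf, mul_sum]
        refine sum_congr rfl fun i hi => ?_
        rw [hnode i hi, hfeval]
        ring
    _ = ∏ k ∈ T, (a k - c) := by
        rw [hfeval, ← prod_const, ← prod_mul_distrib]
        refine prod_congr rfl fun k _ => ?_
        field_simp
        ring

section CauchyLike

variable [Fintype ι] (κ β ω : ι → F)

def cauchyLike : Matrix ι ι F :=
  Matrix.of fun j i => κ j * β i / (1 - κ j * ω i)

def cauchyLikeInv : Matrix ι ι F :=
  Matrix.of fun i j => (1 - κ j * ω i) / (β i * κ j) *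
    (∏ k ∈ univ.erase j, (1 - κ k * ω i) / (κ k - κ j)) *
    (∏ l ∈ univ.erase i, (1 - κ j * ω l) / (ω l - ω i))

variable {κ β ω}

theorem cauchyLike_mul_cauchyLikeInv_apply (hβ : ∀ i, β i ≠ 0) (hκ0 : ∀ j, κ j ≠ 0)
    (h1 : ∀ i j, κ j * ω i ≠ 1) (j j' : ι) :
    (cauchyLike κ β ω * cauchyLikeInv κ β ω) j j' =
      κ j / (κ j' * ∏ k ∈ univ.erase j', (κ k - κ j')) *
        ∑ i, (∏ k ∈ univ.erase j, (1 - κ k * ω i)) *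
          ∏ l ∈ univ.erase i, (1 - κ j' * ω l) / (ω l - ω i) := by
  rw [Matrix.mul_apply, mul_sum]
  refine sum_congr rfl fun i _ => ?_
  have hsplit : (1 - κ j' * ω i) * ∏ k ∈ univ.erase j', (1 - κ k * ω i) =
      (1 - κ j * ω i) * ∏ k ∈ univ.erase j, (1 - κ k * ω i) := by
    rw [mul_prod_erase _ (fun k => 1 - κ k * ω i) (mem_univ j'),
      mul_prod_erase _ (fun k => 1 - κ k * ω i) (mem_univ j)]
  have hji : 1 - κ j * ω i ≠ 0 := sub_ne_zero.mpr (h1 i j).symm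
  have := hβ i
  have := hκ0 j'
  simp only [cauchyLike, cauchyLikeInv, Matrix.of_apply, prod_div_distrib]
  generalize ∏ k ∈ univ.erase j', (1 - κ k * ω i) = P' at hsplit ⊢
  generalize ∏ k ∈ univ.erase j, (1 - κ k * ω i) = P at hsplit ⊢
  field_simp
  congr 1
  linear_combination κ j * (∏ l ∈ univ.erase i, (1 - κ j' * ω l)) * hsplit

theorem cauchyLike_mul_cauchyLikeInv (hω : Function.Injective ω) (hβ : ∀ i, β i ≠ 0)
    (hκ : Function.Injective κ) (hκ0 : ∀ j, κ j ≠ 0) (h1 : ∀ i j, κ j * ω i ≠ 1) :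
    cauchyLike κ β ω * cauchyLikeInv κ β ω = 1 := by
  ext j j'
  have hT : #(univ.erase j) + 1 = #(univ : Finset ι) := card_erase_add_one (mem_univ j)
  rw [cauchyLike_mul_cauchyLikeInv_apply hβ hκ0 h1,
    sum_prod_one_sub_mul_mul_prod_div_sub hω.injOn hT κ (hκ0 j'), Matrix.one_apply]
  split_ifs with hjj
  · subst hjj
    have hD : ∏ k ∈ univ.erase j, (κ k - κ j) ≠ 0 := prod_ne_zero_iff.mpr fun k hk =>
      sub_ne_zero.mpr fun h => (mem_erase.mp hk).1 (hκ h)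
    field_simp [hκ0 j]
  · rw [prod_eq_zero (mem_erase.mpr ⟨Ne.symm hjj, mem_univ j'⟩) (sub_self _), mul_zero]

end CauchyLike

theorem srj_ancillary_formula_general (P : ℕ) (ω β κ : Fin P → ℝ)
    (hω : Function.Injective ω)
    (hβ : ∀ i, β i ≠ 0)
    (hκ : Function.Injective κ) (hκ0 : ∀ j, κ j ≠ 0)
    (h1 : ∀ i j, κ j * ω i ≠ 1)
    (q p : Fin P)
    (x : Fin P → ℝ)
    (hx : x = fun i => ∑ j,
      (1 - κ j * ω i) / (β i * κ j) *
        (∏ k ∈ univ.erase j, (1 - κ k * ω i) / (κ k - κ j)) *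
        (∏ l ∈ univ.erase i, (1 - κ j * ω l) / (ω l - ω i)) *
        Real.log |(1 - κ j * ω q) / (1 - κ j * ω p)|) :
    ∀ j, ∑ i, κ j * β i / (1 - κ j * ω i) * x i =
      Real.log |(1 - κ j * ω q) / (1 - κ j * ω p)| := by
  intro j
  set L : Fin P → ℝ := fun j => Real.log |(1 - κ j * ω q) / (1 - κ j * ω p)|
  have hxL : x = cauchyLikeInv κ β ω *ᵥ L := by subst hx; rfl
  calc ∑ i, κ j * β i / (1 - κ j * ω i) * x i
      = (cauchyLike κ β ω *ᵥ (cauchyLikeInv κ β ω *ᵥ L)) j := by rw [← hxL]; rfl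
    _ = L j := by
      rw [Matrix.mulVec_mulVec, cauchyLike_mul_cauchyLikeInv hω hβ hκ hκ0 h1,
        Matrix.one_mulVec]

/-- Theorem 1 of the paper: closed-form solution of the linear system for the
ancillary variables `∂ω/∂β_q`. -/
theorem srj_ancillary_formula (P : ℕ) (hP : 2 ≤ P) (ω β κ : Fin P → ℝ)
    (hω : Function.Injective ω) (hω0 : ∀ i, ω i ≠ 0)
    (hβ : ∀ i, β i ≠ 0)
    (hκ : Function.Injective κ) (hκ0 : ∀ j, κ j ≠ 0)
    (h1 : ∀ i j, κ j * ω i ≠ 1)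
    (q p : Fin P)
    (hp : ∀ j, 1 - κ j * ω p ≠ 0) (hq : ∀ j, 1 - κ j * ω q ≠ 0)
    (x : Fin P → ℝ)
    (hx : x = fun i => ∑ j,
      (1 - κ j * ω i) / (β i * κ j) *
        (∏ k ∈ univ.erase j, (1 - κ k * ω i) / (κ k - κ j)) *
        (∏ l ∈ univ.erase i, (1 - κ j * ω l) / (ω l - ω i)) *
        Real.log |(1 - κ j * ω q) / (1 - κ j * ω p)|) :
    ∀ j, ∑ i, κ j * β i / (1 - κ j * ω i) * x i =
      Real.log |(1 - κ j * ω q) / (1 - κ j * ω p)| :=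
  srj_ancillary_formula_general P ω β κ hω hβ hκ hκ0 h1 q p x hx
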